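/- arXiv:1707.02940 — 2 statements merged into one kernel-verified Lean document; each statement's English description precedes it below -/
import Mathlib

section
/- The function g(z) = z tan²(z) − 2(tan(z) − z) satisfies: g ≥ 0 on (0, π/2), g is increasing on (0, π/2), and there exists a unique s_c ∈ (0, 1.225) with g(s_c) = 2π; moreover g(1.225) > 2π. -/
/-!
`g(0) = 0` and `g'(z) = tan z · (2z(1 + tan² z) − tan z)`, which is positive on `(0, π/2)`
because `tan z < z(1 + tan² z)` is `sin z cos z < z`, i.e. `sin 2z < 2z`. Hence `g` is strictly
increasing and nonnegative. For the numerics, `tan 1.225 = 1 / tan δ` with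
`δ = π/2 − 1.225 < 0.3458`, and the third-order Taylor bounds for `sin` and `cos` at `0.3458`
give `tan 1.225 > 2.77`, enough for `g(1.225) > 2π`. The root `s_c` comes from the intermediate
value theorem on `[0, 1.225]`.
-/

open Real

noncomputable def g (z : ℝ) : ℝ := z * tan z ^ 2 - 2 * (tan z - z)

lemma g_zero : g 0 = 0 := by simp [g]

lemma hasDerivAt_g {x : ℝ} (hx : cos x ≠ 0) :
    HasDerivAt g (tan x * (2 * x * (1 + tan x ^ 2) - tan x)) x := by
  have htan : HasDerivAt tan (1 + tan x ^ 2) x := by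
    simpa only [one_div, ← inv_one_add_tan_sq hx, inv_inv] using hasDerivAt_tan hx
  have h := ((hasDerivAt_id' x).mul (htan.pow 2)).sub
    ((htan.sub (hasDerivAt_id' x)).const_mul 2)
  exact h.congr_deriv (by simp only [Pi.pow_apply]; ring)

lemma continuousOn_g : ContinuousOn g (Set.Ioo (-(π / 2)) (π / 2)) :=
  (continuousOn_id.mul (continuousOn_tan_Ioo.pow 2)).sub
    (continuousOn_const.mul (continuousOn_tan_Ioo.sub continuousOn_id))

lemma tan_lt_mul_one_add_tan_sq {x : ℝ} (h0 : 0 < x) (hx : x < π / 2) :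
    tan x < x * (1 + tan x ^ 2) := by
  have hcos : 0 < cos x := cos_pos_of_mem_Ioo ⟨by linarith, hx⟩
  have hsc : sin x * cos x < x := by
    have := sin_lt (by positivity : 0 < 2 * x)
    rw [sin_two_mul] at this
    linarith
  rw [← inv_inv (1 + tan x ^ 2), inv_one_add_tan_sq hcos.ne', tan_eq_sin_div_cos,
    div_lt_iff₀ hcos]
  field_simp
  nlinarith

lemma strictMonoOn_g : StrictMonoOn g (Set.Ico 0 (π / 2)) := by
  refine strictMonoOn_of_hasDerivWithinAt_pos (convex_Ico 0 (π / 2))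
    (f' := fun x => tan x * (2 * x * (1 + tan x ^ 2) - tan x))
    (continuousOn_g.mono (Set.Ico_subset_Ioo_left (by linarith [pi_pos])))
    (fun x hx => ?_) (fun x hx => ?_)
  all_goals rw [interior_Ico] at hx
  · have hcos := cos_pos_of_mem_Ioo ⟨by linarith [hx.1, pi_pos], hx.2⟩
    exact (hasDerivAt_g hcos.ne').hasDerivWithinAt
  · have htan := tan_pos_of_pos_of_lt_pi_div_two hx.1 hx.2
    have hlt := tan_lt_mul_one_add_tan_sq hx.1 hx.2
    have : 0 < 2 * x * (1 + tan x ^ 2) - tan x := by nlinarith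
    positivity

lemma tan_1225_gt : (2.77 : ℝ) < tan 1.225 := by
  set δ : ℝ := π / 2 - 1.225 with hδ
  have hδ0 : 0 < δ := by linarith [pi_gt_three]
  have hδ1 : δ ≤ 0.3458 := by linarith [pi_lt_d4]
  have habs : |(0.3458 : ℝ)| ≤ 1 := by norm_num [abs_of_pos]
  have hsin : sin δ < 0.33896 := by
    have htaylor := (abs_le.mp (sin_bound habs)).2
    have hmono := sin_le_sin_of_le_of_le_pi_div_two (by linarith) (by linarith [pi_gt_three]) hδ1
    norm_num [abs_of_pos] at *
    linarith
  have hcos : 0.9394 < cos δ := by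
    have htaylor := (abs_le.mp (cos_bound habs)).1
    have hmono := cos_le_cos_of_nonneg_of_le_pi hδ0.le (by linarith [pi_gt_three]) hδ1
    norm_num [abs_of_pos] at *
    linarith
  have htanδ : tan δ < 1 / 2.77 := by
    rw [tan_eq_sin_div_cos, div_lt_iff₀ (by linarith)]
    nlinarith
  have htanδ0 : 0 < tan δ := tan_pos_of_pos_of_lt_pi_div_two hδ0 (by linarith)
  have hcot : tan 1.225 = (tan δ)⁻¹ := by rw [← tan_pi_div_two_sub, hδ, sub_sub_cancel]
  rw [hcot, lt_inv_comm₀ (by norm_num) htanδ0]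
  simpa using htanδ

lemma two_pi_lt_g_1225 : 2 * π < g 1.225 := by
  have htan := tan_1225_gt
  simp only [g]
  nlinarith [pi_lt_d4]

/-- the function `g(z) = z tan²(z) - 2(tan(z) - z)` is nonnegative and
increasing on `(0, π/2)`, there is a unique `s_c ∈ (0, 1.225)` with `g(s_c) = 2π`, and
`g(1.225) > 2π`. -/
theorem g_properties :
    (∀ z ∈ Set.Ioo (0 : ℝ) (π / 2), 0 ≤ z * Real.tan z ^ 2 - 2 * (Real.tan z - z))
    ∧ StrictMonoOn (fun z : ℝ => z * Real.tan z ^ 2 - 2 * (Real.tan z - z))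
        (Set.Ioo (0 : ℝ) (π / 2))
    ∧ (∃! s : ℝ, s ∈ Set.Ioo (0 : ℝ) 1.225
        ∧ s * Real.tan s ^ 2 - 2 * (Real.tan s - s) = 2 * π)
    ∧ 2 * π < 1.225 * Real.tan 1.225 ^ 2 - 2 * (Real.tan 1.225 - 1.225) := by
  have h0 : (0 : ℝ) ∈ Set.Ico 0 (π / 2) := Set.left_mem_Ico.2 (by positivity)
  have h1225 : Set.Icc (0 : ℝ) 1.225 ⊆ Set.Ico 0 (π / 2) :=
    Set.Icc_subset_Ico_right (by linarith [pi_gt_three])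
  refine ⟨fun z hz => ?_, strictMonoOn_g.mono Set.Ioo_subset_Ico_self, ?_, two_pi_lt_g_1225⟩
  · exact g_zero ▸ (strictMonoOn_g h0 (Set.Ioo_subset_Ico_self hz) hz.1).le
  · obtain ⟨s, hs, hgs⟩ := intermediate_value_Ioo (by norm_num)
      (continuousOn_g.mono (h1225.trans (Set.Ico_subset_Ioo_left (by linarith [pi_pos]))))
      ⟨by rw [g_zero]; exact two_pi_pos, two_pi_lt_g_1225⟩
    refine ⟨s, ⟨hs, hgs⟩, fun t ⟨ht, hgt⟩ => strictMonoOn_g.injOn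
      (h1225 (Set.Ioo_subset_Icc_self ht)) (h1225 (Set.Ioo_subset_Icc_self hs))
      (hgt.trans hgs.symm)⟩
end

section
/- There is a unique pair (s₀, Λ) with s₀ ∈ (1.21, 1.215) and Λ ∈ (3.79, 3.82) satisfying tan(Λ s₀)/(Λ s₀) = tan(s₀)/s₀ with Λs₀ ∈ (π, 3π/2), and Λ² = (2π + tan(s₀) − s₀)/(2π − (s₀ tan²(s₀) − 2(tan(s₀) − s₀))). -/
open Real Set

/-!
Eliminating `Λ = √L(s)` through the second equation leaves one equation `F(s) = 0`, where
`F(s) = tan(Λ(s) s)/(Λ(s) s) - tan s/s`. Existence: `F` changes sign on `[1.21283, 1.21292]`.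
Uniqueness: for `s ∈ I = [1.21, 1.215]` with `Λ(s) ∈ [3.79, 3.82]`, `L` is increasing, so
`u = Λ(s) s ∈ U = [4.5859, 4.6413]` moves at least `3.79` times as fast as `s`; since `u - π` is
close to `π/2`, `tan u/u` has slope at least `11` on `U`, while `tan s/s` has slope at most `7.2`
on `I`, hence `F` is strictly increasing.
All numerical values of `tan` come from the alternating Taylor bounds for `sin` and `cos`.
-/

lemma mul_sub_le_image_sub_of_le_hasDerivAt {f f' : ℝ → ℝ} {a b C : ℝ}
    (hf : ∀ x ∈ Icc a b, HasDerivAt f (f' x) x) (hC : ∀ x ∈ Icc a b, C ≤ f' x)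
    {x y : ℝ} (hx : x ∈ Icc a b) (hy : y ∈ Icc a b) (hxy : x ≤ y) :
    C * (y - x) ≤ f y - f x :=
  (convex_Icc a b).mul_sub_le_image_sub_of_le_deriv
    (fun z hz => (hf z hz).continuousAt.continuousWithinAt)
    (fun z hz => (hf z (interior_subset hz)).differentiableAt.differentiableWithinAt)
    (fun z hz => (hf z (interior_subset hz)).deriv ▸ hC z (interior_subset hz)) x hx y hy hxy

lemma image_sub_le_mul_sub_of_hasDerivAt_le {f f' : ℝ → ℝ} {a b C : ℝ}
    (hf : ∀ x ∈ Icc a b, HasDerivAt f (f' x) x) (hC : ∀ x ∈ Icc a b, f' x ≤ C)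
    {x y : ℝ} (hx : x ∈ Icc a b) (hy : y ∈ Icc a b) (hxy : x ≤ y) :
    f y - f x ≤ C * (y - x) :=
  (convex_Icc a b).image_sub_le_mul_sub_of_deriv_le
    (fun z hz => (hf z hz).continuousAt.continuousWithinAt)
    (fun z hz => (hf z (interior_subset hz)).differentiableAt.differentiableWithinAt)
    (fun z hz => (hf z (interior_subset hz)).deriv ▸ hC z (interior_subset hz)) x hx y hy hxy

noncomputable def cosTaylor (n : ℕ) (x : ℝ) : ℝ :=
  ∑ k ∈ Finset.range n, (-1) ^ k * x ^ (2 * k) / (2 * k).factorial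

noncomputable def sinTaylor (n : ℕ) (x : ℝ) : ℝ :=
  ∑ k ∈ Finset.range n, (-1) ^ k * x ^ (2 * k + 1) / (2 * k + 1).factorial

lemma hasDerivAt_sinTaylor (n : ℕ) (x : ℝ) : HasDerivAt (sinTaylor n) (cosTaylor n x) x := by
  induction n with
  | zero =>
    rw [show sinTaylor 0 = fun _ => 0 from funext fun _ => by simp [sinTaylor]]
    simpa [cosTaylor] using hasDerivAt_const x (0 : ℝ)
  | succ n ih =>
    rw [show sinTaylor (n + 1) = fun y => sinTaylor n y +
      (-1) ^ n * y ^ (2 * n + 1) / (2 * n + 1).factorial from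
      funext fun y => Finset.sum_range_succ _ _]
    refine (ih.fun_add (((hasDerivAt_pow _ x).const_mul _).div_const _)).congr_deriv ?_
    simp only [cosTaylor, Finset.sum_range_succ, Nat.add_sub_cancel, Nat.factorial_succ]
    push_cast
    field_simp

lemma hasDerivAt_cosTaylor (n : ℕ) (x : ℝ) :
    HasDerivAt (cosTaylor (n + 1)) (-sinTaylor n x) x := by
  induction n with
  | zero =>
    rw [show cosTaylor 1 = fun _ => 1 from funext fun _ => by simp [cosTaylor]]
    simpa [sinTaylor] using hasDerivAt_const x (1 : ℝ)
  | succ n ih =>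
    rw [show cosTaylor (n + 1 + 1) = fun y => cosTaylor (n + 1) y +
      (-1) ^ (n + 1) * y ^ (2 * (n + 1)) / (2 * (n + 1)).factorial from
      funext fun y => Finset.sum_range_succ _ _]
    refine (ih.fun_add (((hasDerivAt_pow _ x).const_mul _).div_const _)).congr_deriv ?_
    simp only [sinTaylor, Finset.sum_range_succ, show 2 * (n + 1) = 2 * n + 1 + 1 by ring,
      Nat.add_sub_cancel, Nat.factorial_succ]
    push_cast
    field_simp
    ring

lemma signed_sin_remainder_nonneg {n : ℕ}
    (hcos : ∀ x, 0 ≤ x → 0 ≤ (-1) ^ n * (cos x - cosTaylor n x)) {x : ℝ} (hx : 0 ≤ x) :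
    0 ≤ (-1) ^ n * (sin x - sinTaylor n x) := by
  have h := mul_sub_le_image_sub_of_le_hasDerivAt (a := 0) (b := x) (C := 0)
    (f := fun y => (-1) ^ n * (sin y - sinTaylor n y))
    (fun y _ => ((hasDerivAt_sin y).sub (hasDerivAt_sinTaylor n y)).const_mul _)
    (fun y hy => hcos y hy.1) ⟨le_rfl, hx⟩ ⟨hx, le_rfl⟩ hx
  simpa [sinTaylor] using h

lemma signed_cos_remainder_succ_nonneg {n : ℕ}
    (hsin : ∀ x, 0 ≤ x → 0 ≤ (-1) ^ n * (sin x - sinTaylor n x)) {x : ℝ} (hx : 0 ≤ x) :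
    0 ≤ (-1) ^ (n + 1) * (cos x - cosTaylor (n + 1) x) := by
  have h := mul_sub_le_image_sub_of_le_hasDerivAt (a := 0) (b := x) (C := 0)
    (f := fun y => (-1) ^ (n + 1) * (cos y - cosTaylor (n + 1) y))
    (fun y _ => ((hasDerivAt_cos y).sub (hasDerivAt_cosTaylor n y)).const_mul _)
    (fun y hy => by have := hsin y hy.1; rw [pow_succ]; linarith) ⟨le_rfl, hx⟩ ⟨hx, le_rfl⟩ hx
  simpa [cosTaylor, Finset.sum_range_succ'] using h

-- Each remainder is the integral from `0` of the previous one, so their signs alternate.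
lemma signed_taylor_remainders_nonneg (n : ℕ) {x : ℝ} (hx : 0 ≤ x) :
    0 ≤ (-1) ^ (n + 1) * (cos x - cosTaylor (n + 1) x) ∧
      0 ≤ (-1) ^ (n + 1) * (sin x - sinTaylor (n + 1) x) := by
  induction n generalizing x with
  | zero =>
    have hcos : ∀ y, 0 ≤ y → 0 ≤ (-1) ^ 1 * (cos y - cosTaylor 1 y) := fun y _ => by
      simpa [cosTaylor] using cos_le_one y
    exact ⟨hcos x hx, signed_sin_remainder_nonneg hcos hx⟩
  | succ n ih =>
    have hcos := fun y (hy : 0 ≤ y) => signed_cos_remainder_succ_nonneg (fun z hz => (ih hz).2) hy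
    exact ⟨hcos x hx, signed_sin_remainder_nonneg hcos hx⟩

lemma cos_le_cosTaylor (n : ℕ) {x : ℝ} (hx : 0 ≤ x) : cos x ≤ cosTaylor (2 * n + 1) x := by
  have := (signed_taylor_remainders_nonneg (2 * n) hx).1
  rw [(odd_two_mul_add_one n).neg_one_pow] at this
  linarith

lemma cosTaylor_le_cos (n : ℕ) {x : ℝ} (hx : 0 ≤ x) : cosTaylor (2 * n + 2) x ≤ cos x := by
  have : 0 ≤ (-1 : ℝ) ^ (2 * n + 2) * (cos x - cosTaylor (2 * n + 2) x) :=
    (signed_taylor_remainders_nonneg (2 * n + 1) hx).1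
  rw [Even.neg_one_pow ⟨n + 1, by ring⟩] at this
  linarith

lemma sin_le_sinTaylor (n : ℕ) {x : ℝ} (hx : 0 ≤ x) : sin x ≤ sinTaylor (2 * n + 1) x := by
  have := (signed_taylor_remainders_nonneg (2 * n) hx).2
  rw [(odd_two_mul_add_one n).neg_one_pow] at this
  linarith

lemma sinTaylor_le_sin (n : ℕ) {x : ℝ} (hx : 0 ≤ x) : sinTaylor (2 * n + 2) x ≤ sin x := by
  have : 0 ≤ (-1 : ℝ) ^ (2 * n + 2) * (sin x - sinTaylor (2 * n + 2) x) :=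
    (signed_taylor_remainders_nonneg (2 * n + 1) hx).2
  rw [Even.neg_one_pow ⟨n + 1, by ring⟩] at this
  linarith

lemma lt_tan_of_taylor (n : ℕ) {x c : ℝ} (hx : 0 ≤ x) (hcos : 0 < cos x) (hc : 0 ≤ c)
    (h : c * cosTaylor (2 * n + 1) x < sinTaylor (2 * n + 2) x) : c < tan x := by
  rw [tan_eq_sin_div_cos, lt_div_iff₀ hcos]
  calc c * cos x ≤ c * cosTaylor (2 * n + 1) x := by gcongr; exact cos_le_cosTaylor n hx
    _ < sinTaylor (2 * n + 2) x := h
    _ ≤ sin x := sinTaylor_le_sin n hx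

lemma tan_lt_of_taylor (n : ℕ) {x c : ℝ} (hx : 0 ≤ x) (hcos : 0 < cos x) (hc : 0 ≤ c)
    (h : sinTaylor (2 * n + 1) x < c * cosTaylor (2 * n + 2) x) : tan x < c := by
  rw [tan_eq_sin_div_cos, div_lt_iff₀ hcos]
  calc sin x ≤ sinTaylor (2 * n + 1) x := sin_le_sinTaylor n hx
    _ < c * cosTaylor (2 * n + 2) x := h
    _ ≤ c * cos x := by gcongr; exact cosTaylor_le_cos n hx

lemma cos_pos_of_le_three_halves {x : ℝ} (h0 : 0 ≤ x) (h1 : x ≤ 1.5) : 0 < cos x :=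
  cos_pos_of_mem_Ioo ⟨by linarith [pi_pos], by linarith [pi_gt_three]⟩

lemma tan_le_tan_of_le {x y : ℝ} (hx : -(π / 2) < x) (hy : y < π / 2) (hxy : x ≤ y) :
    tan x ≤ tan y :=
  strictMonoOn_tan.monotoneOn ⟨hx, by linarith⟩ ⟨by linarith, hy⟩ hxy

lemma hasDerivAt_tan_of_cos_ne_zero {x : ℝ} (hcos : cos x ≠ 0) :
    HasDerivAt tan (1 + tan x ^ 2) x := by
  convert hasDerivAt_tan hcos using 1
  rw [← inv_one_add_tan_sq hcos, one_div, inv_inv]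

noncomputable def tanc (x : ℝ) : ℝ := tan x / x

lemma hasDerivAt_tanc {x : ℝ} (hcos : cos x ≠ 0) (hx : x ≠ 0) :
    HasDerivAt tanc (((1 + tan x ^ 2) * x - tan x) / x ^ 2) x :=
  ((hasDerivAt_tan_of_cos_ne_zero hcos).fun_div (hasDerivAt_id' x) hx).congr_deriv (by ring)

lemma tan_1_21283_mem : tan 1.21283 ∈ Ioo (2.6731 : ℝ) 2.6733 :=
  ⟨lt_tan_of_taylor 2 (by norm_num) (cos_pos_of_le_three_halves (by norm_num) (by norm_num))
    (by norm_num) (by norm_num [cosTaylor, sinTaylor, Finset.sum_range_succ, Nat.factorial]),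
  tan_lt_of_taylor 2 (by norm_num) (cos_pos_of_le_three_halves (by norm_num) (by norm_num))
    (by norm_num) (by norm_num [cosTaylor, sinTaylor, Finset.sum_range_succ, Nat.factorial])⟩

lemma tan_1_21292_mem : tan 1.21292 ∈ Ioo (2.6739 : ℝ) 2.674 :=
  ⟨lt_tan_of_taylor 2 (by norm_num) (cos_pos_of_le_three_halves (by norm_num) (by norm_num))
    (by norm_num) (by norm_num [cosTaylor, sinTaylor, Finset.sum_range_succ, Nat.factorial]),
  tan_lt_of_taylor 2 (by norm_num) (cos_pos_of_le_three_halves (by norm_num) (by norm_num))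
    (by norm_num) (by norm_num [cosTaylor, sinTaylor, Finset.sum_range_succ, Nat.factorial])⟩

lemma tan_1_215_lt : tan 1.215 < 2.71 :=
  tan_lt_of_taylor 2 (by norm_num) (cos_pos_of_le_three_halves (by norm_num) (by norm_num))
    (by norm_num) (by norm_num [cosTaylor, sinTaylor, Finset.sum_range_succ, Nat.factorial])

lemma tan_1_4443_gt : (7.5 : ℝ) < tan 1.4443 :=
  lt_tan_of_taylor 2 (by norm_num) (cos_pos_of_le_three_halves (by norm_num) (by norm_num))
    (by norm_num) (by norm_num [cosTaylor, sinTaylor, Finset.sum_range_succ, Nat.factorial])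

lemma tan_1_4672_lt : tan 1.4672 < 9.7 :=
  tan_lt_of_taylor 2 (by norm_num) (cos_pos_of_le_three_halves (by norm_num) (by norm_num))
    (by norm_num) (by norm_num [cosTaylor, sinTaylor, Finset.sum_range_succ, Nat.factorial])

lemma tan_1_4796_gt : (10.5 : ℝ) < tan 1.4796 :=
  lt_tan_of_taylor 2 (by norm_num) (cos_pos_of_le_three_halves (by norm_num) (by norm_num))
    (by norm_num) (by norm_num [cosTaylor, sinTaylor, Finset.sum_range_succ, Nat.factorial])

noncomputable def lengthNum (s : ℝ) : ℝ := 2 * π + tan s - s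

noncomputable def lengthDen (s : ℝ) : ℝ := 2 * π - (s * tan s ^ 2 - 2 * (tan s - s))

-- `L(s)` and `Λ_{1,s} = √L(s)` of the paper.
noncomputable def lengthRatio (s : ℝ) : ℝ := lengthNum s / lengthDen s

noncomputable def lengthLambda (s : ℝ) : ℝ := √(lengthRatio s)

noncomputable def matchingDefect (s : ℝ) : ℝ := tanc (lengthLambda s * s) - tanc s

section OnI

variable {s s' : ℝ}

lemma cos_pos_of_mem_I (hs : s ∈ Icc (1.21 : ℝ) 1.215) : 0 < cos s :=
  cos_pos_of_le_three_halves (by linarith [hs.1]) (by linarith [hs.2])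

lemma tan_mem_Ioo_of_mem_I (hs : s ∈ Icc (1.21 : ℝ) 1.215) : tan s ∈ Ioo (1 : ℝ) 2.71 := by
  have hpi := pi_gt_three
  constructor
  · rw [← tan_pi_div_four]
    exact tan_lt_tan_of_lt_of_lt_pi_div_two (by linarith) (by linarith [hs.2])
      (by linarith [pi_lt_d2, hs.1])
  · exact (tan_le_tan_of_le (by linarith [hs.1]) (by linarith) hs.2).trans_lt tan_1_215_lt

lemma two_mul_sub_le_tan_sub_of_mem_I (hs : s ∈ Icc (1.21 : ℝ) 1.215)
    (hs' : s' ∈ Icc (1.21 : ℝ) 1.215) (hss' : s ≤ s') : 2 * (s' - s) ≤ tan s' - tan s :=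
  mul_sub_le_image_sub_of_le_hasDerivAt
    (fun x hx => hasDerivAt_tan_of_cos_ne_zero (cos_pos_of_mem_I hx).ne')
    (fun x hx => by nlinarith [(tan_mem_Ioo_of_mem_I hx).1]) hs hs' hss'

lemma tanc_sub_le_of_mem_I (hs : s ∈ Icc (1.21 : ℝ) 1.215)
    (hs' : s' ∈ Icc (1.21 : ℝ) 1.215) (hss' : s ≤ s') : tanc s' - tanc s ≤ 7.2 * (s' - s) := by
  refine image_sub_le_mul_sub_of_hasDerivAt_le
    (fun x hx => hasDerivAt_tanc (cos_pos_of_mem_I hx).ne' (by linarith [hx.1]))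
    (fun x hx => ?_) hs hs' hss'
  obtain ⟨ht1, ht2⟩ := tan_mem_Ioo_of_mem_I hx
  rw [div_le_iff₀ (by nlinarith [hx.1])]
  nlinarith [hx.1, hx.2]

lemma lengthDen_pos_of_mem_I (hs : s ∈ Icc (1.21 : ℝ) 1.215) : 0 < lengthDen s := by
  rw [lengthDen]
  obtain ⟨ht1, ht2⟩ := tan_mem_Ioo_of_mem_I hs
  nlinarith [pi_gt_d2, hs.1, hs.2, mul_pos (sub_pos.2 ht2) (sub_pos.2 ht1),
    mul_nonneg (sub_nonneg.2 hs.2) (sq_nonneg (tan s))]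

lemma lengthNum_pos_of_mem_I (hs : s ∈ Icc (1.21 : ℝ) 1.215) : 0 < lengthNum s := by
  rw [lengthNum]
  linarith [pi_gt_three, (tan_mem_Ioo_of_mem_I hs).1, hs.2]

end OnI

lemma lengthRatio_strictMonoOn : StrictMonoOn lengthRatio (Icc (1.21 : ℝ) 1.215) := by
  intro s hs s' hs' hss'
  obtain ⟨ht1, -⟩ := tan_mem_Ioo_of_mem_I hs
  obtain ⟨ht1', -⟩ := tan_mem_Ioo_of_mem_I hs'
  have htan := two_mul_sub_le_tan_sub_of_mem_I hs hs' hss'.le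
  have hN := lengthNum_pos_of_mem_I hs
  have hD := lengthDen_pos_of_mem_I hs
  have hN_lt : lengthNum s < lengthNum s' := by
    rw [lengthNum, lengthNum]
    linarith
  -- `lengthDen s - lengthDen s'`
  --   `= (tan s' - tan s) (s' (tan s' + tan s) - 2) + (s' - s) (tan² s + 2)`
  have hD_lt : lengthDen s' < lengthDen s := by
    rw [lengthDen, lengthDen]
    nlinarith [mul_nonneg (by linarith : 0 ≤ tan s' - tan s)
      (by nlinarith [hs'.1] : 0 ≤ s' * (tan s' + tan s) - 2),
      mul_pos (sub_pos.2 hss') (by positivity : (0 : ℝ) < tan s ^ 2 + 2)]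
  rw [lengthRatio, lengthRatio, div_lt_div_iff₀ hD (lengthDen_pos_of_mem_I hs')]
  calc lengthNum s * lengthDen s' < lengthNum s * lengthDen s := mul_lt_mul_of_pos_left hD_lt hN
    _ < lengthNum s' * lengthDen s := mul_lt_mul_of_pos_right hN_lt hD

lemma lengthLambda_sq {s : ℝ} (hs : s ∈ Icc (1.21 : ℝ) 1.215) :
    lengthLambda s ^ 2 = lengthRatio s :=
  sq_sqrt (div_pos (lengthNum_pos_of_mem_I hs) (lengthDen_pos_of_mem_I hs)).le

lemma eq_lengthLambda_of_sq_eq {s Λ : ℝ} (hΛ : 0 ≤ Λ) (h : Λ ^ 2 = lengthRatio s) :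
    Λ = lengthLambda s := by
  rw [lengthLambda, ← h, sqrt_sq hΛ]

lemma lengthLambda_monotoneOn : MonotoneOn lengthLambda (Icc (1.21 : ℝ) 1.215) :=
  fun _ _ _ _ h => sqrt_le_sqrt (lengthRatio_strictMonoOn.monotoneOn ‹_› ‹_› h)

lemma lengthLambda_mem_Icc {s l h : ℝ} (hl : 0 ≤ l) (hh : 0 ≤ h) (hls : l ^ 2 ≤ lengthRatio s)
    (hsh : lengthRatio s ≤ h ^ 2) : lengthLambda s ∈ Icc l h :=
  ⟨(le_sqrt hl ((sq_nonneg l).trans hls)).2 hls, (sqrt_le_left hh).2 hsh⟩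

lemma lengthLambda_1_21283_mem : lengthLambda 1.21283 ∈ Icc (3.791 : ℝ) 3.8 := by
  have hD := lengthDen_pos_of_mem_I (s := 1.21283) ⟨by norm_num, by norm_num⟩
  have ht := mul_pos (sub_pos.2 tan_1_21283_mem.1) (sub_pos.2 tan_1_21283_mem.2)
  refine lengthLambda_mem_Icc (by norm_num) (by norm_num) ?_ ?_
  · rw [lengthRatio, le_div_iff₀ hD, lengthNum, lengthDen]
    nlinarith [pi_gt_d6, pi_lt_d6, tan_1_21283_mem.1, tan_1_21283_mem.2]
  · rw [lengthRatio, div_le_iff₀ hD, lengthNum, lengthDen]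
    nlinarith [pi_gt_d6, pi_lt_d6, tan_1_21283_mem.1, tan_1_21283_mem.2]

lemma lengthLambda_1_21292_mem : lengthLambda 1.21292 ∈ Icc (3.81 : ℝ) 3.819 := by
  have hD := lengthDen_pos_of_mem_I (s := 1.21292) ⟨by norm_num, by norm_num⟩
  have ht := mul_pos (sub_pos.2 tan_1_21292_mem.1) (sub_pos.2 tan_1_21292_mem.2)
  refine lengthLambda_mem_Icc (by norm_num) (by norm_num) ?_ ?_
  · rw [lengthRatio, le_div_iff₀ hD, lengthNum, lengthDen]
    nlinarith [pi_gt_d6, pi_lt_d6, tan_1_21292_mem.1, tan_1_21292_mem.2]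
  · rw [lengthRatio, div_le_iff₀ hD, lengthNum, lengthDen]
    nlinarith [pi_gt_d6, pi_lt_d6, tan_1_21292_mem.1, tan_1_21292_mem.2]

lemma lengthLambda_mem_of_mem_Icc {s : ℝ} (hs : s ∈ Icc (1.21283 : ℝ) 1.21292) :
    lengthLambda s ∈ Icc (3.791 : ℝ) 3.819 := by
  have hI : Icc (1.21283 : ℝ) 1.21292 ⊆ Icc 1.21 1.215 :=
    Icc_subset_Icc (by norm_num) (by norm_num)
  exact ⟨lengthLambda_1_21283_mem.1.trans
      (lengthLambda_monotoneOn (hI ⟨le_rfl, by norm_num⟩) (hI hs) hs.1),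
    (lengthLambda_monotoneOn (hI hs) (hI ⟨by norm_num, le_rfl⟩) hs.2).trans
      lengthLambda_1_21292_mem.2⟩

section OnU

variable {u u' : ℝ}

lemma mul_mem_U {s Λ : ℝ} (hs : s ∈ Icc (1.21 : ℝ) 1.215) (hΛ : Λ ∈ Icc (3.79 : ℝ) 3.82) :
    Λ * s ∈ Icc (4.5859 : ℝ) 4.6413 :=
  ⟨by nlinarith [hs.1, hΛ.1], by nlinarith [hs.2, hΛ.2, hs.1]⟩

lemma sub_pi_mem_of_mem_U (hu : u ∈ Icc (4.5859 : ℝ) 4.6413) : u - π ∈ Icc (1.4443 : ℝ) 1.5 :=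
  ⟨by linarith [hu.1, pi_lt_d6], by linarith [hu.2, pi_gt_d6]⟩

lemma cos_neg_of_mem_U (hu : u ∈ Icc (4.5859 : ℝ) 4.6413) : cos u < 0 := by
  have hv := sub_pi_mem_of_mem_U hu
  have := cos_pos_of_le_three_halves (by linarith [hv.1]) hv.2
  rw [cos_sub_pi] at this
  linarith

lemma tan_gt_of_mem_U (hu : u ∈ Icc (4.5859 : ℝ) 4.6413) : 7.5 < tan u := by
  have hv := sub_pi_mem_of_mem_U hu
  rw [← tan_sub_pi]
  exact tan_1_4443_gt.trans_le
    (tan_le_tan_of_le (by linarith [pi_pos]) (by linarith [hv.2, pi_gt_three]) hv.1)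

lemma le_tanc_sub_of_mem_U (hu : u ∈ Icc (4.5859 : ℝ) 4.6413)
    (hu' : u' ∈ Icc (4.5859 : ℝ) 4.6413) (huu' : u ≤ u') : 11 * (u' - u) ≤ tanc u' - tanc u := by
  refine mul_sub_le_image_sub_of_le_hasDerivAt
    (fun x hx => hasDerivAt_tanc (cos_neg_of_mem_U hx).ne (by linarith [hx.1]))
    (fun x hx => ?_) hu hu' huu'
  have ht := tan_gt_of_mem_U hx
  rw [le_div_iff₀ (by nlinarith [hx.1])]
  nlinarith [hx.1, hx.2, mul_pos (sub_pos.2 ht) (sub_pos.2 ht)]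

end OnU

lemma matchingDefect_strictMonoOn :
    StrictMonoOn matchingDefect
      {s | s ∈ Icc (1.21 : ℝ) 1.215 ∧ lengthLambda s ∈ Icc (3.79 : ℝ) 3.82} := by
  rintro s ⟨hs, hΛ⟩ s' ⟨hs', hΛ'⟩ hss'
  have hΛΛ' := lengthLambda_monotoneOn hs hs' hss'.le
  have hu_sub : 3.79 * (s' - s) ≤ lengthLambda s' * s' - lengthLambda s * s := by
    nlinarith [hΛ'.1, hs.1]
  have hu := le_tanc_sub_of_mem_U (mul_mem_U hs hΛ) (mul_mem_U hs' hΛ')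
    (by linarith [sub_pos.2 hss'])
  have hs_sub := tanc_sub_le_of_mem_I hs hs' hss'.le
  simp only [matchingDefect]
  linarith [sub_pos.2 hss']

lemma continuousOn_matchingDefect :
    ContinuousOn matchingDefect (Icc (1.21283 : ℝ) 1.21292) := by
  intro s hs
  have hI : s ∈ Icc (1.21 : ℝ) 1.215 := ⟨by linarith [hs.1], by linarith [hs.2]⟩
  have hΛ := lengthLambda_mem_of_mem_Icc hs
  have hU : lengthLambda s * s ∈ Icc (4.5859 : ℝ) 4.6413 :=
    mul_mem_U hI ⟨by linarith [hΛ.1], by linarith [hΛ.2]⟩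
  have htan : ContinuousAt tan s := continuousAt_tan.2 (cos_pos_of_mem_I hI).ne'
  have hratio : ContinuousAt lengthRatio s :=
    ((continuousAt_const.add htan).sub continuousAt_id).div
      (continuousAt_const.sub ((continuousAt_id.mul (htan.pow 2)).sub
        (continuousAt_const.mul (htan.sub continuousAt_id)))) (lengthDen_pos_of_mem_I hI).ne'
  have hu : ContinuousAt (fun s => lengthLambda s * s) s :=
    (continuous_sqrt.continuousAt.comp hratio).mul continuousAt_id
  have htanc_u : ContinuousAt tanc (lengthLambda s * s) :=
    (hasDerivAt_tanc (cos_neg_of_mem_U hU).ne (by linarith [hU.1])).continuousAt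
  have htanc_s : ContinuousAt tanc s :=
    (hasDerivAt_tanc (cos_pos_of_mem_I hI).ne' (by linarith [hI.1])).continuousAt
  exact ((htanc_u.comp (f := fun s => lengthLambda s * s) hu).sub htanc_s).continuousWithinAt

lemma matchingDefect_1_21283_neg : matchingDefect 1.21283 < 0 := by
  obtain ⟨hΛ1, hΛ2⟩ := lengthLambda_1_21283_mem
  have hu1 : 4.5978 ≤ lengthLambda 1.21283 * 1.21283 := by linarith
  have htan : tan (lengthLambda 1.21283 * 1.21283) < 9.7 := by
    rw [← tan_sub_pi]
    exact (tan_le_tan_of_le (by linarith [pi_lt_d2]) (by linarith [pi_gt_d2])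
      (by linarith [pi_gt_d6])).trans_lt tan_1_4672_lt
  have hprod := mul_le_mul tan_1_21283_mem.1.le hu1 (by norm_num) (by linarith [tan_1_21283_mem.1])
  rw [matchingDefect, tanc, tanc, sub_neg, div_lt_div_iff₀ (by linarith) (by norm_num)]
  linarith

lemma matchingDefect_1_21292_pos : 0 < matchingDefect 1.21292 := by
  obtain ⟨hΛ1, hΛ2⟩ := lengthLambda_1_21292_mem
  have hu2 : lengthLambda 1.21292 * 1.21292 ≤ 4.6323 := by linarith
  have htan : 10.5 < tan (lengthLambda 1.21292 * 1.21292) := by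
    rw [← tan_sub_pi]
    exact tan_1_4796_gt.trans_le (tan_le_tan_of_le (by linarith [pi_pos])
      (by linarith [pi_gt_d6]) (by linarith [pi_lt_d6]))
  have hprod := mul_le_mul tan_1_21292_mem.2.le hu2 (by linarith) (by norm_num)
  rw [matchingDefect, tanc, tanc, sub_pos, div_lt_div_iff₀ (by norm_num) (by linarith)]
  linarith

lemma exists_matchingDefect_eq_zero :
    ∃ s ∈ Icc (1.21283 : ℝ) 1.21292, matchingDefect s = 0 :=
  intermediate_value_Icc (by norm_num) continuousOn_matchingDefect
    ⟨matchingDefect_1_21283_neg.le, matchingDefect_1_21292_pos.le⟩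

/-- there is a unique pair `(s₀, Λ)` with `s₀ ∈ (1.21, 1.215)`,
`Λ ∈ (3.79, 3.82)`, `Λs₀ ∈ (π, 3π/2)`, satisfying `tan(Λs₀)/(Λs₀) = tan(s₀)/s₀` and
`Λ² = (2π + tan(s₀) - s₀)/(2π - (s₀ tan²(s₀) - 2(tan(s₀) - s₀)))`. -/
theorem unique_linear_minimizer_parameters :
    ∃! p : ℝ × ℝ,
      p.1 ∈ Set.Ioo (1.21 : ℝ) 1.215
      ∧ p.2 ∈ Set.Ioo (3.79 : ℝ) 3.82
      ∧ p.2 * p.1 ∈ Set.Ioo π (3 * π / 2)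
      ∧ Real.tan (p.2 * p.1) / (p.2 * p.1) = Real.tan p.1 / p.1
      ∧ p.2 ^ 2 = (2 * π + Real.tan p.1 - p.1)
          / (2 * π - (p.1 * Real.tan p.1 ^ 2 - 2 * (Real.tan p.1 - p.1))) := by
  obtain ⟨s₀, hs₀, hroot⟩ := exists_matchingDefect_eq_zero
  have hI₀ : s₀ ∈ Ioo (1.21 : ℝ) 1.215 := ⟨by linarith [hs₀.1], by linarith [hs₀.2]⟩
  have hΛ₀ : lengthLambda s₀ ∈ Ioo (3.79 : ℝ) 3.82 := by
    obtain ⟨h1, h2⟩ := lengthLambda_mem_of_mem_Icc hs₀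
    exact ⟨by linarith, by linarith⟩
  have hU := mul_mem_U (Ioo_subset_Icc_self hI₀) (Ioo_subset_Icc_self hΛ₀)
  refine ⟨(s₀, lengthLambda s₀), ⟨hI₀, hΛ₀,
    ⟨by linarith [hU.1, pi_lt_d2], by linarith [hU.2, pi_gt_d2]⟩,
    sub_eq_zero.1 hroot, lengthLambda_sq (Ioo_subset_Icc_self hI₀)⟩, ?_⟩
  rintro ⟨s, Λ⟩ ⟨hs, hΛ, -, htanc, hsq⟩
  obtain rfl : Λ = lengthLambda s := eq_lengthLambda_of_sq_eq (by linarith [hΛ.1]) hsq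
  obtain rfl : s = s₀ := matchingDefect_strictMonoOn.injOn
    ⟨Ioo_subset_Icc_self hs, Ioo_subset_Icc_self hΛ⟩
    ⟨Ioo_subset_Icc_self hI₀, Ioo_subset_Icc_self hΛ₀⟩ ((sub_eq_zero.2 htanc).trans hroot.symm)
  rfl
end
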